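/- arXiv:2105.02601 — 3 statements merged into one kernel-verified Lean document; each statement's English description precedes it below -/
import Mathlib

section
/- Let F_2 be the field with two elements and let R = F_2[h0, h1, v, w1]/(h0·h1, h1^3, h1·v, v^2 + h0^2·w1). Then R is a free module over the polynomial subring F_2[w1], with basis given by the images of the monomials {h0^i : i ≥ 0} ∪ {h1, h1^2} ∪ {v·h0^i : i ≥ 0}. -/
noncomputable section

open MvPolynomial

abbrev F2 := ZMod 2

/-- The polynomial ring `F₂[h₀, h₁, v, w₁]`. -/
abbrev KOP := MvPolynomial (Fin 4) F2

def h0 : KOP := X 0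
def h1 : KOP := X 1
def vP : KOP := X 2
def w1 : KOP := X 3

def koExtIdeal : Ideal KOP :=
  Ideal.span {h0 * h1, h1 ^ 3, h1 * vP, vP ^ 2 + h0 ^ 2 * w1}

/-- `R = F₂[h₀, h₁, v, w₁]/(h₀h₁, h₁³, h₁v, v² + h₀²w₁) ≅ Ext_{A(1)}(F₂, F₂)`. -/
abbrev KOExt := KOP ⧸ koExtIdeal

def mkKO : KOP →+* KOExt := Ideal.Quotient.mk koExtIdeal

/-- `R` as a module over `F₂[w₁]`, via `X ↦ w₁`. -/
instance : Module (Polynomial F2) KOExt :=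
  RingHom.toModule (Polynomial.aeval (mkKO w1)).toRingHom

/-!
Using `v² = h₀²w₁`, every monomial `h₀^a h₁^b v^c w₁^d` is congruent modulo the relations to a power
of `w₁` times one of the proposed basis elements, or to `0`; so they span. Conversely, sending each
monomial of `F₂[h₀, h₁, v, w₁]` to this normal form in the free `F₂[w₁]`-module is an `F₂`-linear map
which kills every monomial multiple of the four relators (for `v² + h₀²w₁` both monomials have the
same normal form) and commutes with multiplication by `w₁`. It therefore descends to an
`F₂[w₁]`-linear map on `R`, inverse to the map from the free module.
-/

theorem pow_mul_pow_eq_zero_of_mul_eq_zero {M : Type*} [CommMonoidWithZero M] {a b : M}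
    (h : a * b = 0) {m n : ℕ} (hm : m ≠ 0) (hn : n ≠ 0) : a ^ m * b ^ n = 0 := by
  obtain ⟨m, rfl⟩ := Nat.exists_eq_succ_of_ne_zero hm
  obtain ⟨n, rfl⟩ := Nat.exists_eq_succ_of_ne_zero hn
  rw [pow_succ, pow_succ, mul_mul_mul_comm, h, mul_zero]

theorem MvPolynomial.linearMap_eq_zero_of_mem_span {σ R M : Type*} [CommSemiring R]
    [AddCommMonoid M] [Module R M] (f : MvPolynomial σ R →ₗ[R] M) {s : Set (MvPolynomial σ R)}
    (hf : ∀ e, ∀ g ∈ s, f (monomial e 1 * g) = 0) {x : MvPolynomial σ R}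
    (hx : x ∈ Ideal.span s) : f x = 0 := by
  suffices ∀ p, f (p * x) = 0 by simpa using this 1
  induction hx using Submodule.span_induction with
  | mem g hg =>
    have : f ∘ₗ LinearMap.mulRight R g = 0 := by
      ext e
      simp only [LinearMap.comp_apply, LinearMap.mulRight_apply, LinearMap.zero_apply]
      exact hf e g hg
    exact fun p => congr($this p)
  | zero => simp
  | add a b _ _ ha hb => intro p; rw [mul_add, map_add, ha, hb, add_zero]
  | smul r a _ ha => intro p; rw [smul_eq_mul, ← mul_assoc, ha]

theorem Polynomial.map_smul_of_map_X_smul {K M N : Type*} [CommSemiring K]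
    [AddCommMonoid M] [Module K M] [Module (Polynomial K) M] [IsScalarTower K (Polynomial K) M]
    [AddCommMonoid N] [Module K N] [Module (Polynomial K) N] [IsScalarTower K (Polynomial K) N]
    (f : M →ₗ[K] N) (hX : ∀ m, f ((X : Polynomial K) • m) = (X : Polynomial K) • f m)
    (q : Polynomial K) (m : M) :
    f (q • m) = q • f m := by
  induction q using Polynomial.induction_on generalizing m with
  | C a => rw [← algebraMap_eq, algebraMap_smul, algebraMap_smul, map_smul]
  | add p q hp hq => rw [add_smul, add_smul, map_add, hp, hq]
  | monomial n a hp => rw [pow_succ, ← mul_assoc, mul_smul _ X, hp, hX, ← mul_smul]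

namespace KOExt

theorem mkKO_eq_zero_of_mem {p : KOP}
    (hp : p ∈ ({h0 * h1, h1 ^ 3, h1 * vP, vP ^ 2 + h0 ^ 2 * w1} : Set KOP)) : mkKO p = 0 :=
  Ideal.Quotient.eq_zero_iff_mem.mpr (Ideal.subset_span hp)

theorem mkKO_h0_mul_h1 : mkKO h0 * mkKO h1 = 0 := by
  rw [← map_mul, mkKO_eq_zero_of_mem (by simp)]

theorem mkKO_h1_pow_three : mkKO h1 ^ 3 = 0 := by
  rw [← map_pow, mkKO_eq_zero_of_mem (by simp)]

theorem mkKO_h1_mul_vP : mkKO h1 * mkKO vP = 0 := by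
  rw [← map_mul, mkKO_eq_zero_of_mem (by simp)]

theorem mkKO_vP_sq : mkKO vP ^ 2 = mkKO h0 ^ 2 * mkKO w1 := by
  rw [← map_pow, ← map_pow, ← map_mul, mkKO, Ideal.Quotient.eq, CharTwo.sub_eq_add]
  exact Ideal.subset_span (by simp)

theorem mkKO_monomial (e : Fin 4 →₀ ℕ) :
    mkKO (monomial e 1) = mkKO h0 ^ e 0 * mkKO h1 ^ e 1 * mkKO vP ^ e 2 * mkKO w1 ^ e 3 := by
  rw [monomial_eq, C_1, one_mul, Finsupp.prod_fintype _ _ (fun _ => pow_zero _), map_prod,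
    Fin.prod_univ_four]
  simp only [map_pow, h0, h1, vP, w1]

theorem smul_def (q : Polynomial F2) (x : KOExt) : q • x = Polynomial.aeval (mkKO w1) q * x := rfl

abbrev Idx := ℕ ⊕ (Fin 2 ⊕ ℕ)

def basisVec : Idx → KOExt
  | .inl i => mkKO (h0 ^ i)
  | .inr (.inl j) => mkKO (h1 ^ ((j : ℕ) + 1))
  | .inr (.inr i) => mkKO (vP * h0 ^ i)

/-- `h₀^a h₁^b v^c w₁^d` reduces, using `v² = h₀² w₁`, to
`w₁^(d + ⌊c/2⌋) h₀^(a + 2⌊c/2⌋) v^(c mod 2)` when `b = 0`; when `b ≠ 0` it vanishes unless it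
is `h₁^b w₁^d` with `b ≤ 2`. -/
def normalForm (a b c d : ℕ) : Idx →₀ Polynomial F2 :=
  if b = 0 then
    Finsupp.single (if Even c then .inl (a + 2 * (c / 2)) else .inr (.inr (a + 2 * (c / 2))))
      (Polynomial.X ^ (d + c / 2))
  else if a = 0 ∧ c = 0 ∧ b ≤ 2 then
    Finsupp.single (.inr (.inl (if b = 1 then 0 else 1))) (Polynomial.X ^ d)
  else 0

def ofFree : (Idx →₀ Polynomial F2) →ₗ[Polynomial F2] KOExt :=
  Finsupp.linearCombination (Polynomial F2) basisVec

theorem ofFree_single_X_pow (i : Idx) (k : ℕ) :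
    ofFree (Finsupp.single i (Polynomial.X ^ k)) = mkKO w1 ^ k * basisVec i := by
  rw [ofFree, Finsupp.linearCombination_single, smul_def, map_pow, Polynomial.aeval_X]

theorem ofFree_normalForm (a b c d : ℕ) :
    ofFree (normalForm a b c d) = mkKO h0 ^ a * mkKO h1 ^ b * mkKO vP ^ c * mkKO w1 ^ d := by
  rw [normalForm]
  by_cases hb : b = 0
  · have hv : mkKO vP ^ (2 * (c / 2)) = (mkKO h0 ^ 2 * mkKO w1) ^ (c / 2) := by
      rw [pow_mul, mkKO_vP_sq]
    rw [if_pos hb, hb, pow_zero, mul_one]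
    split_ifs with hc
    · rw [ofFree_single_X_pow, basisVec, map_pow]
      conv_rhs => rw [← Nat.two_mul_div_two_of_even hc, hv]
      ring
    · rw [ofFree_single_X_pow, basisVec, map_mul, map_pow]
      conv_rhs =>
        rw [← Nat.two_mul_div_two_add_one_of_odd (Nat.not_even_iff_odd.mp hc), pow_succ, hv]
      ring
  · rw [if_neg hb]
    by_cases h : a = 0 ∧ c = 0 ∧ b ≤ 2
    · obtain ⟨rfl, rfl, hb2⟩ := h
      rw [if_pos ⟨rfl, rfl, hb2⟩, ofFree_single_X_pow]
      obtain rfl | rfl : b = 1 ∨ b = 2 := by omega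
      all_goals simp [basisVec, mul_comm]
    · rw [if_neg h, map_zero]
      obtain ha | hc | hb3 : a ≠ 0 ∨ c ≠ 0 ∨ 3 ≤ b := by omega
      · rw [pow_mul_pow_eq_zero_of_mul_eq_zero mkKO_h0_mul_h1 ha hb, zero_mul, zero_mul]
      · rw [mul_assoc (mkKO h0 ^ a), pow_mul_pow_eq_zero_of_mul_eq_zero mkKO_h1_mul_vP hb hc,
          mul_zero, zero_mul]
      · rw [pow_eq_zero_of_le hb3 mkKO_h1_pow_three, mul_zero, zero_mul, zero_mul]

theorem normalForm_succ_right (a b c d : ℕ) :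
    normalForm a b c (d + 1) = (Polynomial.X : Polynomial F2) • normalForm a b c d := by
  simp only [normalForm]
  split_ifs <;> simp only [Finsupp.smul_single, smul_zero, smul_eq_mul, ← pow_succ',
    add_right_comm]

theorem normalForm_eq_zero {a b c d : ℕ} (hb : b ≠ 0) (h : a ≠ 0 ∨ c ≠ 0 ∨ 2 < b) :
    normalForm a b c d = 0 := by
  rw [normalForm, if_neg hb, if_neg (by omega)]

theorem normalForm_add_two (a b c d : ℕ) :
    normalForm a b (c + 2) d = normalForm (a + 2) b c (d + 1) := by
  by_cases hb : b = 0
  · have hc : (c + 2) / 2 = c / 2 + 1 := by omega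
    simp only [normalForm, if_pos hb, Nat.even_add, even_two, iff_true, hc,
      show a + 2 * (c / 2 + 1) = a + 2 + 2 * (c / 2) by ring,
      show d + (c / 2 + 1) = d + 1 + c / 2 by ring]
  · rw [normalForm_eq_zero hb (by omega), normalForm_eq_zero hb (by omega)]

def reduce : KOP →ₗ[F2] Idx →₀ Polynomial F2 :=
  (basisMonomials (Fin 4) F2).constr F2 fun e => normalForm (e 0) (e 1) (e 2) (e 3)

theorem reduce_monomial (e : Fin 4 →₀ ℕ) :
    reduce (monomial e 1) = normalForm (e 0) (e 1) (e 2) (e 3) := by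
  simpa [reduce] using (basisMonomials (Fin 4) F2).constr_basis F2 _ e

theorem reduce_monomial_mul (e : Fin 4 →₀ ℕ) (a b c d : ℕ) :
    reduce (monomial e 1 * (h0 ^ a * h1 ^ b * vP ^ c * w1 ^ d)) =
      normalForm (e 0 + a) (e 1 + b) (e 2 + c) (e 3 + d) := by
  simp only [h0, h1, vP, w1, X_pow_eq_monomial, monomial_mul, one_mul, reduce_monomial]
  simp [add_assoc]

theorem reduce_prod_pow (a b c d : ℕ) :
    reduce (h0 ^ a * h1 ^ b * vP ^ c * w1 ^ d) = normalForm a b c d := by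
  simpa using reduce_monomial_mul 0 a b c d

theorem reduce_w1_mul (p : KOP) :
    reduce (w1 * p) = (Polynomial.X : Polynomial F2) • reduce p := by
  suffices reduce ∘ₗ LinearMap.mulLeft F2 w1 = (Polynomial.X : Polynomial F2) • reduce from
    LinearMap.congr_fun this p
  refine MvPolynomial.linearMap_ext fun e => LinearMap.ext_ring ?_
  simpa [mul_comm, normalForm_succ_right, reduce_monomial] using reduce_monomial_mul e 0 0 0 1

theorem reduce_eq_zero_of_mem {p : KOP} (hp : p ∈ koExtIdeal) : reduce p = 0 := by
  refine MvPolynomial.linearMap_eq_zero_of_mem_span reduce ?_ hp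
  intro e g hg
  simp only [Set.mem_insert_iff, Set.mem_singleton_iff] at hg
  rcases hg with rfl | rfl | rfl | rfl
  · rw [show h0 * h1 = h0 ^ 1 * h1 ^ 1 * vP ^ 0 * w1 ^ 0 by ring, reduce_monomial_mul]
    exact normalForm_eq_zero (by omega) (by omega)
  · rw [show h1 ^ 3 = h0 ^ 0 * h1 ^ 3 * vP ^ 0 * w1 ^ 0 by ring, reduce_monomial_mul]
    exact normalForm_eq_zero (by omega) (by omega)
  · rw [show h1 * vP = h0 ^ 0 * h1 ^ 1 * vP ^ 1 * w1 ^ 0 by ring, reduce_monomial_mul]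
    exact normalForm_eq_zero (by omega) (by omega)
  · rw [← CharTwo.sub_eq_add, mul_sub, map_sub, sub_eq_zero,
      show vP ^ 2 = h0 ^ 0 * h1 ^ 0 * vP ^ 2 * w1 ^ 0 by ring,
      show h0 ^ 2 * w1 = h0 ^ 2 * h1 ^ 0 * vP ^ 0 * w1 ^ 1 by ring,
      reduce_monomial_mul, reduce_monomial_mul]
    exact normalForm_add_two _ _ _ _

def toFreeF2 : KOExt →ₗ[F2] Idx →₀ Polynomial F2 :=
  (koExtIdeal.restrictScalars F2).liftQ reduce (fun _ => reduce_eq_zero_of_mem) ∘ₗ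
    (Submodule.Quotient.restrictScalarsEquiv F2 koExtIdeal).symm.toLinearMap

instance : IsScalarTower F2 (Polynomial F2) KOExt :=
  ⟨fun c q x => by rw [smul_def, smul_def, map_smul, smul_mul_assoc]⟩

theorem toFreeF2_X_smul (x : KOExt) :
    toFreeF2 ((Polynomial.X : Polynomial F2) • x) =
      (Polynomial.X : Polynomial F2) • toFreeF2 x := by
  obtain ⟨p, rfl⟩ := Ideal.Quotient.mk_surjective x
  rw [smul_def, Polynomial.aeval_X, mkKO, ← map_mul]
  exact reduce_w1_mul p

def toFree : KOExt →ₗ[Polynomial F2] Idx →₀ Polynomial F2 where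
  toFun := toFreeF2
  map_add' := map_add toFreeF2
  map_smul' := Polynomial.map_smul_of_map_X_smul toFreeF2 toFreeF2_X_smul

theorem ofFree_comp_toFree : ofFree ∘ₗ toFree = LinearMap.id := by
  suffices ofFree.restrictScalars F2 ∘ₗ reduce =
      (Ideal.Quotient.mkₐ F2 koExtIdeal).toLinearMap by
    refine LinearMap.ext fun x => ?_
    obtain ⟨p, rfl⟩ := Ideal.Quotient.mk_surjective x
    exact LinearMap.congr_fun this p
  refine MvPolynomial.linearMap_ext fun e => LinearMap.ext_ring ?_
  simp only [LinearMap.comp_apply, LinearMap.restrictScalars_apply, AlgHom.toLinearMap_apply,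
    Ideal.Quotient.mkₐ_eq_mk, reduce_monomial, ofFree_normalForm]
  exact (mkKO_monomial e).symm

theorem toFree_basisVec (i : Idx) : toFree (basisVec i) = Finsupp.single i 1 := by
  rcases i with n | j | n
  · show reduce (h0 ^ n) = _
    rw [show h0 ^ n = h0 ^ n * h1 ^ 0 * vP ^ 0 * w1 ^ 0 by ring, reduce_prod_pow]
    simp [normalForm]
  · show reduce (h1 ^ ((j : ℕ) + 1)) = _
    rw [show h1 ^ ((j : ℕ) + 1) = h0 ^ 0 * h1 ^ ((j : ℕ) + 1) * vP ^ 0 * w1 ^ 0 by ring,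
      reduce_prod_pow]
    fin_cases j <;> simp [normalForm]
  · show reduce (vP * h0 ^ n) = _
    rw [show vP * h0 ^ n = h0 ^ n * h1 ^ 0 * vP ^ 1 * w1 ^ 0 by ring, reduce_prod_pow]
    simp [normalForm]

theorem toFree_comp_ofFree : toFree ∘ₗ ofFree = LinearMap.id := by
  ext i : 2
  simpa [ofFree] using toFree_basisVec i

def freeEquiv : (Idx →₀ Polynomial F2) ≃ₗ[Polynomial F2] KOExt :=
  LinearEquiv.ofLinearMap ofFree toFree ofFree_comp_toFree toFree_comp_ofFree

end KOExt

/-- `R` is a free `F₂[w₁]`-module with basis `{h₀^i} ∪ {h₁, h₁²} ∪ {v·h₀^i}`. -/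
theorem koExt_free_over_w1 :
    ∃ B : Module.Basis (ℕ ⊕ (Fin 2 ⊕ ℕ)) (Polynomial F2) KOExt,
      (∀ i : ℕ, B (Sum.inl i) = mkKO (h0 ^ i)) ∧
      (∀ j : Fin 2, B (Sum.inr (Sum.inl j)) = mkKO (h1 ^ ((j : ℕ) + 1))) ∧
      (∀ i : ℕ, B (Sum.inr (Sum.inr i)) = mkKO (vP * h0 ^ i)) := by
  refine ⟨.ofRepr KOExt.freeEquiv.symm, fun i => ?_, fun j => ?_, fun i => ?_⟩ <;>
    simp [KOExt.freeEquiv, KOExt.ofFree, KOExt.basisVec]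
end
end

section
/- Let R = F_2[h0, h1, v, w1]/(h0·h1, h1^3, h1·v, v^2 + h0^2·w1). The subalgebra of R generated by h0, h1 and w1 equals, as an F_2[w1]-submodule, the span of {h0^i w1^k : i,k ≥ 0} ∪ {h1 w1^k, h1^2 w1^k : k ≥ 0}, and the quotient of R by this subalgebra is a free F_2[h0, w1]-module on one generator, the image of v. -/
noncomputable section

open MvPolynomial

/-- `F₂[h₀, w₁]`. -/
abbrev H0W1 := MvPolynomial (Fin 2) F2

/-- `R` as a module over `F₂[h₀, w₁]`. -/
instance : Module H0W1 KOExt :=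
  RingHom.toModule (MvPolynomial.aeval ![mkKO h0, mkKO w1]).toRingHom

/-!
Every element of the subalgebra is an `F₂`-combination of monomials `h₀ⁱh₁ʲw₁ᵏ`, and
`h₀h₁ = h₁³ = 0` kills all of them except those listed. Modulo the subalgebra, `v² = h₀²w₁` and
`h₁v = 0` reduce every monomial to an `F₂[h₀, w₁]`-multiple of `v`. For freeness, send `R` to
`F₂[x, y]` by `h₀ ↦ x², h₁ ↦ 0, v ↦ x²y, w₁ ↦ y²`: the subalgebra lands in the algebra generated
by squares, which `∂/∂y` kills in characteristic `2`, while `p • v` goes to `p(x², y²)·x²y = p²x²y`,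
whose `y`-derivative `p²x²` vanishes only for `p = 0`.
-/

-- Shortcut instance: the default search for `SMul H0W1 KOExt` explores `Algebra` paths and times out.
instance : SMul H0W1 KOExt := Module.toDistribMulAction.toDistribSMul.toSMulZeroClass.toSMul

instance : IsScalarTower (Polynomial F2) KOExt KOExt where
  smul_assoc _ x y := mul_assoc _ x y

instance : IsScalarTower H0W1 KOExt KOExt where
  smul_assoc _ x y := mul_assoc _ x y

instance : IsScalarTower F2 (Polynomial F2) KOExt where
  smul_assoc c p x := by
    change Polynomial.aeval (mkKO w1) (c • p) * x = c • (Polynomial.aeval (mkKO w1) p * x)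
    rw [map_smul, smul_mul_assoc]

instance : IsScalarTower F2 H0W1 KOExt where
  smul_assoc c p x := by
    change MvPolynomial.aeval ![mkKO h0, mkKO w1] (c • p) * x
      = c • (MvPolynomial.aeval ![mkKO h0, mkKO w1] p * x)
    rw [map_smul, smul_mul_assoc]

theorem Submonoid.mem_closure_triple {M : Type*} [CommMonoid M] {a b c x : M} :
    x ∈ Submonoid.closure {a, b, c} ↔ ∃ i j k : ℕ, a ^ i * b ^ j * c ^ k = x := by
  rw [← Set.singleton_union, Submonoid.closure_union, Submonoid.mem_sup]
  simp only [Submonoid.mem_closure_singleton, Submonoid.mem_closure_pair]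
  constructor
  · rintro ⟨_, ⟨i, rfl⟩, _, ⟨j, k, rfl⟩, rfl⟩
    exact ⟨i, j, k, mul_assoc _ _ _⟩
  · rintro ⟨i, j, k, rfl⟩
    exact ⟨_, ⟨i, rfl⟩, _, ⟨j, k, rfl⟩, (mul_assoc _ _ _).symm⟩

def Subalgebra.toSubmoduleOfSMulOneMem {R S A : Type*} [CommSemiring R] [Semiring A]
    [Algebra R A] [Semiring S] [Module S A] [IsScalarTower S A A] (B : Subalgebra R A)
    (h : ∀ s : S, s • (1 : A) ∈ B) : Submodule S A where
  carrier := B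
  add_mem' := add_mem
  zero_mem' := zero_mem B
  smul_mem' s x hx := by
    rw [← smul_one_mul s x]
    exact mul_mem (h s) hx

theorem MvPolynomial.pderiv_eq_zero_of_mem_adjoin_isSquare {σ R : Type*} [CommRing R]
    [CharP R 2] (i : σ) {f : MvPolynomial σ R}
    (hf : f ∈ Algebra.adjoin R {g : MvPolynomial σ R | IsSquare g}) : pderiv i f = 0 := by
  refine Derivation.eqOn_adjoin (D2 := 0) ?_ hf
  rintro _ ⟨r, rfl⟩
  rw [Derivation.leibniz, smul_eq_mul, CharTwo.add_self_eq_zero]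
  rfl

theorem mkKO_h0_mul_h1 : mkKO h0 * mkKO h1 = 0 := by
  rw [← map_mul]
  exact Ideal.Quotient.eq_zero_iff_mem.2 (Ideal.subset_span (by simp))

theorem mkKO_h1_pow_three : mkKO h1 ^ 3 = 0 := by
  rw [← map_pow]
  exact Ideal.Quotient.eq_zero_iff_mem.2 (Ideal.subset_span (by simp))

theorem mkKO_h1_mul_vP : mkKO h1 * mkKO vP = 0 := by
  rw [← map_mul]
  exact Ideal.Quotient.eq_zero_iff_mem.2 (Ideal.subset_span (by simp))

theorem mkKO_vP_sq : mkKO vP ^ 2 = mkKO h0 ^ 2 * mkKO w1 := by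
  rw [← map_pow, ← map_pow, ← map_mul]
  refine Ideal.Quotient.eq.2 ?_
  rw [CharTwo.sub_eq_add]
  exact Ideal.subset_span (by simp)

def adjoinH0H1W1 : Subalgebra F2 KOExt := Algebra.adjoin F2 {mkKO h0, mkKO h1, mkKO w1}

def spanningMonomials : Set KOExt :=
  {x | ∃ i k : ℕ, x = mkKO (h0 ^ i * w1 ^ k)} ∪
    {x | ∃ k : ℕ, x = mkKO (h1 * w1 ^ k) ∨ x = mkKO (h1 ^ 2 * w1 ^ k)}

theorem mkKO_h0_mem_adjoin : mkKO h0 ∈ adjoinH0H1W1 := Algebra.subset_adjoin (by simp)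

theorem mkKO_h1_mem_adjoin : mkKO h1 ∈ adjoinH0H1W1 := Algebra.subset_adjoin (by simp)

theorem mkKO_w1_mem_adjoin : mkKO w1 ∈ adjoinH0H1W1 := Algebra.subset_adjoin (by simp)

theorem polynomial_smul_one_mem_adjoin (p : Polynomial F2) : p • (1 : KOExt) ∈ adjoinH0H1W1 := by
  change Polynomial.aeval (mkKO w1) p * 1 ∈ adjoinH0H1W1
  rw [mul_one]
  exact Algebra.adjoin_le (Set.singleton_subset_iff.2 mkKO_w1_mem_adjoin)
    (Polynomial.aeval_mem_adjoin_singleton F2 _)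

theorem mvPolynomial_smul_one_mem_adjoin (p : H0W1) : p • (1 : KOExt) ∈ adjoinH0H1W1 := by
  change MvPolynomial.aeval ![mkKO h0, mkKO w1] p * 1 ∈ adjoinH0H1W1
  rw [mul_one]
  refine Algebra.adjoin_le ?_ ((Algebra.adjoin_range_eq_range_aeval F2 _).ge ⟨p, rfl⟩)
  rintro _ ⟨i, rfl⟩
  fin_cases i
  exacts [mkKO_h0_mem_adjoin, mkKO_w1_mem_adjoin]

theorem spanningMonomials_subset_adjoin : spanningMonomials ⊆ adjoinH0H1W1 := by
  rintro _ (⟨i, k, rfl⟩ | ⟨k, rfl | rfl⟩) <;> simp only [map_mul, map_pow, SetLike.mem_coe] <;>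
    apply_rules [mul_mem, pow_mem, mkKO_h0_mem_adjoin, mkKO_h1_mem_adjoin, mkKO_w1_mem_adjoin]

theorem mkKO_monomial_mem_span (i j k : ℕ) :
    mkKO h0 ^ i * mkKO h1 ^ j * mkKO w1 ^ k
      ∈ Submodule.span (Polynomial F2) spanningMonomials := by
  match i, j with
  | i, 0 => exact Submodule.subset_span (Or.inl ⟨i, k, by simp⟩)
  | 0, 1 => exact Submodule.subset_span (Or.inr ⟨k, Or.inl (by simp)⟩)
  | 0, 2 => exact Submodule.subset_span (Or.inr ⟨k, Or.inr (by simp)⟩)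
  | 0, j + 3 =>
    convert Submodule.zero_mem _
    linear_combination (mkKO h1 ^ j * mkKO w1 ^ k) * mkKO_h1_pow_three
  | i + 1, j + 1 =>
    convert Submodule.zero_mem _
    linear_combination (mkKO h0 ^ i * mkKO h1 ^ j * mkKO w1 ^ k) * mkKO_h0_mul_h1

theorem coe_adjoinH0H1W1_eq_span :
    (adjoinH0H1W1 : Set KOExt) = Submodule.span (Polynomial F2) spanningMonomials := by
  refine Set.Subset.antisymm (fun x hx => ?_) ?_
  · rw [SetLike.mem_coe, ← Subalgebra.mem_toSubmodule, adjoinH0H1W1, Algebra.adjoin_eq_span] at hx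
    refine Submodule.span_le (p := (Submodule.span (Polynomial F2) _).restrictScalars F2)
      |>.2 ?_ hx
    rintro _ hx
    obtain ⟨i, j, k, rfl⟩ := Submonoid.mem_closure_triple.1 hx
    exact mkKO_monomial_mem_span i j k
  · exact Submodule.span_le (p := adjoinH0H1W1.toSubmoduleOfSMulOneMem
      polynomial_smul_one_mem_adjoin) |>.2 spanningMonomials_subset_adjoin

def adjoinH0H1W1Submodule : Submodule H0W1 KOExt :=
  adjoinH0H1W1.toSubmoduleOfSMulOneMem mvPolynomial_smul_one_mem_adjoin

theorem mkKO_monomial_eq (u : Fin 4 →₀ ℕ) :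
    mkKO (monomial u 1) = mkKO h0 ^ u 0 * mkKO h1 ^ u 1 * mkKO vP ^ u 2 * mkKO w1 ^ u 3 := by
  rw [monomial_eq, C_1, one_mul, Finsupp.prod_fintype _ _ (by simp), Fin.prod_univ_four]
  simp [h0, h1, vP, w1]

theorem mkKO_monomial_mem_sup_span_vP (a b c d : ℕ) :
    mkKO h0 ^ a * mkKO h1 ^ b * mkKO vP ^ c * mkKO w1 ^ d
      ∈ adjoinH0H1W1Submodule ⊔ Submodule.span H0W1 {mkKO vP} := by
  obtain ⟨k, rfl | rfl⟩ := Nat.even_or_odd' c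
  · apply Submodule.mem_sup_left
    change _ ∈ adjoinH0H1W1
    rw [pow_mul, mkKO_vP_sq]
    apply_rules [mul_mem, pow_mem, mkKO_h0_mem_adjoin, mkKO_h1_mem_adjoin, mkKO_w1_mem_adjoin]
  · apply Submodule.mem_sup_right
    rcases b with _ | b
    · convert Submodule.smul_mem _ (X 0 ^ (a + 2 * k) * X 1 ^ (k + d) : H0W1)
        (Submodule.mem_span_singleton_self (mkKO vP))
      change _ = MvPolynomial.aeval ![mkKO h0, mkKO w1] _ * _
      rw [pow_succ, pow_mul, mkKO_vP_sq]
      simp only [map_mul, map_pow, aeval_X, Matrix.cons_val_zero, Matrix.cons_val_one]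
      ring
    · convert Submodule.zero_mem _
      linear_combination
        (mkKO h0 ^ a * mkKO h1 ^ b * mkKO vP ^ (2 * k) * mkKO w1 ^ d) * mkKO_h1_mul_vP

theorem sup_span_vP_eq_top : adjoinH0H1W1Submodule ⊔ Submodule.span H0W1 {mkKO vP} = ⊤ := by
  rw [eq_top_iff]
  rintro x -
  obtain ⟨q, rfl⟩ := Ideal.Quotient.mk_surjective x
  change mkKO q ∈ _
  induction q using MvPolynomial.induction_on' with
  | monomial u a =>
    rw [← mul_one a, ← C_mul_monomial, map_mul, mkKO_monomial_eq]
    change algebraMap F2 KOExt a * _ ∈ _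
    rw [← Algebra.smul_def]
    exact Submodule.smul_of_tower_mem _ a (mkKO_monomial_mem_sup_span_vP _ _ _ _)
  | add p q hp hq => rw [map_add]; exact add_mem hp hq

def detectKOP : KOP →ₐ[F2] MvPolynomial (Fin 2) F2 :=
  aeval ![X 0 ^ 2, 0, X 0 ^ 2 * X 1, X 1 ^ 2]

theorem koExtIdeal_le_ker_detectKOP : koExtIdeal ≤ RingHom.ker detectKOP := by
  refine Ideal.span_le.2 ?_
  rintro _ (rfl | rfl | rfl | rfl) <;> simp [detectKOP, h0, h1, vP, w1]
  linear_combination (X 0 ^ 4 * X 1 ^ 2 : MvPolynomial (Fin 2) F2) *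
    CharTwo.two_eq_zero (R := MvPolynomial (Fin 2) F2)

def detect : KOExt →ₐ[F2] MvPolynomial (Fin 2) F2 :=
  Ideal.Quotient.liftₐ koExtIdeal detectKOP fun _ ha => koExtIdeal_le_ker_detectKOP ha

theorem detect_mkKO (q : KOP) : detect (mkKO q) = detectKOP q := rfl

theorem detect_smul (p : H0W1) (x : KOExt) : detect (p • x) = p ^ 2 * detect x := by
  have hexpand : detect.comp (MvPolynomial.aeval ![mkKO h0, mkKO w1]) = expand 2 := by
    refine MvPolynomial.algHom_ext fun i => ?_
    fin_cases i <;> simp [detect_mkKO, detectKOP, h0, w1]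
  change detect (MvPolynomial.aeval ![mkKO h0, mkKO w1] p * x) = _
  rw [map_mul, ← AlgHom.comp_apply, hexpand, ← map_frobenius_expand 2, ZMod.frobenius_zmod,
    MvPolynomial.map_id]

theorem detect_adjoin_le : adjoinH0H1W1.map detect ≤ Algebra.adjoin F2 {g | IsSquare g} := by
  rw [adjoinH0H1W1, AlgHom.map_adjoin]
  refine Algebra.adjoin_mono ?_
  rintro _ ⟨_, (rfl | rfl | rfl), rfl⟩
  exacts [⟨X 0, by simp [detect_mkKO, detectKOP, h0, sq]⟩,
    ⟨0, by simp [detect_mkKO, detectKOP, h1]⟩,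
    ⟨X 1, by simp [detect_mkKO, detectKOP, w1, sq]⟩]

theorem eq_zero_of_smul_vP_mem {p : H0W1} (hp : p • mkKO vP ∈ adjoinH0H1W1) : p = 0 := by
  have hsq : ∀ f : MvPolynomial (Fin 2) F2, pderiv 1 (f ^ 2) = 0 := fun f =>
    pderiv_eq_zero_of_mem_adjoin_isSquare 1 (Algebra.subset_adjoin ⟨f, sq f⟩)
  have hzero : pderiv 1 (detect (p • mkKO vP)) = 0 :=
    pderiv_eq_zero_of_mem_adjoin_isSquare 1 (detect_adjoin_le ⟨_, hp, rfl⟩)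
  have hv : detect (mkKO vP) = X 0 ^ 2 * X 1 := by simp [detect_mkKO, detectKOP, vP]
  rw [detect_smul, hv, pderiv_mul, pderiv_mul, hsq, hsq, pderiv_X_self] at hzero
  simpa [X_ne_zero] using hzero

theorem toSpanSingleton_mkQ_vP_bijective :
    Function.Bijective (LinearMap.toSpanSingleton H0W1 _ (adjoinH0H1W1Submodule.mkQ (mkKO vP))) := by
  refine ⟨(injective_iff_map_eq_zero _).2 fun p hp => eq_zero_of_smul_vP_mem ?_, ?_⟩
  · rwa [LinearMap.toSpanSingleton_apply, ← LinearMap.map_smul, Submodule.mkQ_apply,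
      Submodule.Quotient.mk_eq_zero] at hp
  · rw [← LinearMap.range_eq_top, ← LinearMap.span_singleton_eq_range, ← Set.image_singleton,
      Submodule.span_image, Submodule.map_mkQ_eq_top]
    exact sup_span_vP_eq_top

def quotientBasis : Module.Basis Unit H0W1 (KOExt ⧸ adjoinH0H1W1Submodule) :=
  (Module.Basis.singleton Unit H0W1).map (LinearEquiv.ofBijective _ toSpanSingleton_mkQ_vP_bijective)

theorem quotientBasis_apply (u : Unit) : quotientBasis u = Submodule.Quotient.mk (mkKO vP) := by
  simp [quotientBasis]

/-- The subalgebra of `R` generated by `h₀, h₁, w₁` equals, as an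
`F₂[w₁]`-submodule, the span of `{h₀^i w₁^k} ∪ {h₁ w₁^k, h₁² w₁^k}`, and the
quotient of `R` by this subalgebra is a free `F₂[h₀, w₁]`-module on one
generator, the image of `v`. -/
theorem koExt_subalgebra_and_quotient :
    ((Algebra.adjoin F2 {mkKO h0, mkKO h1, mkKO w1} : Subalgebra F2 KOExt) : Set KOExt)
      = ↑(Submodule.span (Polynomial F2)
          ({x | ∃ i k : ℕ, x = mkKO (h0 ^ i * w1 ^ k)} ∪
           {x | ∃ k : ℕ, x = mkKO (h1 * w1 ^ k) ∨ x = mkKO (h1 ^ 2 * w1 ^ k)})) ∧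
    ∃ T : Submodule H0W1 KOExt,
      (T : Set KOExt)
        = ((Algebra.adjoin F2 {mkKO h0, mkKO h1, mkKO w1} : Subalgebra F2 KOExt) : Set KOExt) ∧
      ∃ Bq : Module.Basis Unit H0W1 (KOExt ⧸ T),
        Bq () = Submodule.Quotient.mk (mkKO vP) :=
  ⟨coe_adjoinH0H1W1_eq_span, adjoinH0H1W1Submodule, rfl, quotientBasis, quotientBasis_apply ()⟩
end
end

section
/- Define S ⊆ ℕ × ℕ to be the set of pairs (n, s) of the form (8m, 4m), (8m+1, 4m+1), (8m+2, 4m+2), (8m+2, 4m+1), (8m+3, 4m+2), (8m+4, 4m+3), (8m+3, 4m+1), (8m+7, 4m+2), (8m+8, 4m+3), (8m+9, 4m+4), (8m+9, 4m+3), (8m+10, 4m+4) for m ≥ 0. Then there is no pair of elements (n, s) and (n-1, s') in S with s' ≥ s + 3. -/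
/-!
Every bidegree `(n, s)` of `E₃(j/2)` lies in the band `n - 3 ≤ 2s ≤ n + 2` around the line of
slope `1/2` (the periodicity generator `w₁` has bidegree `(8, 4)`, on that line). A differential
`d_r` with `r ≥ 3` lowers `n` by one and raises `2s` by at least `6`, which no band of width `5`
can accommodate.
-/

/-- The set of (stem, filtration) bidegrees of the `F₂`-basis of `E₃(j/2)`. -/
def jmod2Bidegrees : Set (ℕ × ℕ) :=
  {q | ∃ m : ℕ,
    q = (8*m, 4*m) ∨ q = (8*m+1, 4*m+1) ∨ q = (8*m+2, 4*m+2) ∨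
    q = (8*m+2, 4*m+1) ∨ q = (8*m+3, 4*m+2) ∨ q = (8*m+4, 4*m+3) ∨
    q = (8*m+3, 4*m+1) ∨ q = (8*m+7, 4*m+2) ∨ q = (8*m+8, 4*m+3) ∨
    q = (8*m+9, 4*m+4) ∨ q = (8*m+9, 4*m+3) ∨ q = (8*m+10, 4*m+4)}

theorem jmod2Bidegrees_two_mul_filtration_bounds {q : ℕ × ℕ} (hq : q ∈ jmod2Bidegrees) :
    q.1 ≤ 2 * q.2 + 3 ∧ 2 * q.2 ≤ q.1 + 2 := by
  obtain ⟨m, hm⟩ := hq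
  rcases hm with rfl | rfl | rfl | rfl | rfl | rfl | rfl | rfl | rfl | rfl | rfl | rfl <;>
    dsimp only <;> omega

/-- There is no pair of elements `(n, s)` and `(n-1, s')` in `S` with `s' ≥ s + 3`. -/
theorem no_differential_bidegrees :
    ¬ ∃ n s s' : ℕ, (n, s) ∈ jmod2Bidegrees ∧ (n - 1, s') ∈ jmod2Bidegrees ∧
      s + 3 ≤ s' := by
  rintro ⟨n, s, s', hsource, htarget, hjump⟩
  obtain ⟨hs, -⟩ := jmod2Bidegrees_two_mul_filtration_bounds hsource
  obtain ⟨-, hs'⟩ := jmod2Bidegrees_two_mul_filtration_bounds htarget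
  omega
end
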